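/- arXiv:1309.0619 — 2 statements merged into one kernel-verified Lean document; each statement's English description precedes it below -/
import Mathlib

section
/- Let d ≥ 1, K > 0, k₁ > 0 and let p ≥ 2 be a real number. There exist constants α_p ≥ 0 and β_p ≥ 0, depending only on p, K and k₁ and on the values ‖b(0)‖ and ‖σ(0)‖, such that: whenever b : ℝ^d → ℝ^d satisfies ⟨b(y) − b(x), y − x⟩ ≤ −K‖y − x‖² for all x, y; f : ℝ^d → ℝ^d satisfies ‖f(x)‖ ≤ k₁(1 + ‖x‖) for all x; and σ : ℝ^d → M_{d×d}(ℝ) is k₁-Lipschitz in the Frobenius norm, then for every x ∈ ℝ^d with x ≠ 0, p‖x‖^{p−2}⟨x, b(x) + f(x)⟩ + (p/2)‖x‖^{p−2}‖σ(x)‖² + (p(p−2)/2)‖x‖^{p−4}‖σ(x)ᵀ x‖² ≤ β_p‖x‖^p + α_p‖x‖^{p−2}. -/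
/-!
Factoring out `‖x‖ ^ (p - 2)`, it suffices to bound
`p ⟪x, b x + f x⟫ + (p / 2) ‖σ x‖² + (p (p - 2) / 2) (‖(σ x)ᵀ x‖ / ‖x‖)²` by `β ‖x‖² + α`.
Dissipativity gives `⟪x, b x⟫ ≤ ⟪x, b 0⟫`, so the drift term grows at most quadratically.
Lipschitz continuity gives `‖σ x‖ ≤ ‖σ 0‖ + k₁ ‖x‖`, and `‖(σ x)ᵀ x‖ ≤ ‖σ x‖ ‖x‖`, so the two
diffusion terms together are at most `(p (p - 1) / 2) (‖σ 0‖ + k₁ ‖x‖)²`.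
-/

open scoped RealInnerProductSpace Matrix

noncomputable def frobNorm {d : ℕ} (A : Matrix (Fin d) (Fin d) ℝ) : ℝ :=
  Real.sqrt (∑ i, ∑ j, (A i j) ^ 2)

noncomputable def eucNorm {d : ℕ} (v : Fin d → ℝ) : ℝ :=
  Real.sqrt (∑ i, (v i) ^ 2)

section Frobenius

attribute [local instance] Matrix.frobeniusNormedAddCommGroup

variable {d : ℕ}

lemma frobNorm_eq_norm (A : Matrix (Fin d) (Fin d) ℝ) : frobNorm A = ‖A‖ := by
  rw [frobNorm, Matrix.frobenius_norm_def, Real.sqrt_eq_rpow]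
  simp [Real.norm_eq_abs, sq_abs]

lemma frobNorm_nonneg (A : Matrix (Fin d) (Fin d) ℝ) : 0 ≤ frobNorm A :=
  Real.sqrt_nonneg _

lemma eucNorm_eq_norm (v : Fin d → ℝ) :
    eucNorm v = ‖(WithLp.toLp 2 v : EuclideanSpace ℝ (Fin d))‖ := by
  simp [eucNorm, EuclideanSpace.norm_eq, Real.norm_eq_abs, sq_abs]

lemma eucNorm_transpose_mulVec_le (A : Matrix (Fin d) (Fin d) ℝ) (x : EuclideanSpace ℝ (Fin d)) :
    eucNorm (Aᵀ *ᵥ WithLp.equiv 2 (Fin d → ℝ) x) ≤ frobNorm A * ‖x‖ := by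
  rw [eucNorm_eq_norm, frobNorm_eq_norm, ← Matrix.frobenius_norm_replicateCol (ι := Unit),
    Matrix.replicateCol_mulVec, ← Matrix.frobenius_norm_transpose A]
  calc _ ≤ ‖Aᵀ‖ * ‖Matrix.replicateCol Unit (WithLp.equiv 2 (Fin d → ℝ) x)‖ :=
        Matrix.frobenius_norm_mul _ _
    _ = ‖Aᵀ‖ * ‖x‖ := by rw [Matrix.frobenius_norm_replicateCol]; rfl

lemma frobNorm_le_of_lipschitz {σ : EuclideanSpace ℝ (Fin d) → Matrix (Fin d) (Fin d) ℝ} {k : ℝ}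
    (hσ : ∀ x y, frobNorm (σ x - σ y) ≤ k * ‖x - y‖) (x : EuclideanSpace ℝ (Fin d)) :
    frobNorm (σ x) ≤ frobNorm (σ 0) + k * ‖x‖ := by
  have h := hσ x 0
  rw [sub_zero] at h
  simp only [frobNorm_eq_norm] at h ⊢
  linarith [norm_le_norm_add_norm_sub' (σ x) (σ 0)]

end Frobenius

lemma inner_le_norm_map_zero_mul_norm_of_dissipative {E : Type*} [NormedAddCommGroup E]
    [InnerProductSpace ℝ E] {b : E → E} {K : ℝ} (hK : 0 ≤ K)
    (hb : ∀ x y, ⟪b y - b x, y - x⟫ ≤ -K * ‖y - x‖ ^ 2) (x : E) :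
    ⟪x, b x⟫ ≤ ‖b 0‖ * ‖x‖ := by
  have h := hb 0 x
  rw [sub_zero, inner_sub_left] at h
  rw [real_inner_comm]
  nlinarith [real_inner_le_norm (b 0) x, sq_nonneg ‖x‖]

lemma generator_bracket_le {p B C k r I F G : ℝ} (hp : 2 ≤ p) (hB : 0 ≤ B) (hk : 0 ≤ k)
    (hI : I ≤ (B + k) * r + k * r ^ 2) (hF₀ : 0 ≤ F) (hF : F ≤ C + k * r)
    (hG₀ : 0 ≤ G) (hG : G ≤ F) :
    p * I + p / 2 * F ^ 2 + p * (p - 2) / 2 * G ^ 2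
      ≤ (p * (B + 2 * k) + p * (p - 1) * k ^ 2) * r ^ 2 + (p * (B + k) + p * (p - 1) * C ^ 2) := by
  have hG2 : G ^ 2 ≤ F ^ 2 := pow_le_pow_left₀ hG₀ hG 2
  have hF2 : F ^ 2 ≤ 2 * C ^ 2 + 2 * k ^ 2 * r ^ 2 := by
    nlinarith [sq_nonneg (C - k * r)]
  have hr : r ≤ 1 + r ^ 2 := by nlinarith [sq_nonneg (r - 1)]
  have hp2 : 0 ≤ p * (p - 2) / 2 := by nlinarith
  calc p * I + p / 2 * F ^ 2 + p * (p - 2) / 2 * G ^ 2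
      ≤ p * ((B + k) * r + k * r ^ 2) + p * (p - 1) / 2 * F ^ 2 := by
        nlinarith [mul_le_mul_of_nonneg_left hG2 hp2]
    _ ≤ p * ((B + k) * (1 + r ^ 2) + k * r ^ 2)
          + p * (p - 1) / 2 * (2 * C ^ 2 + 2 * k ^ 2 * r ^ 2) := by
        have : 0 ≤ p * (p - 1) / 2 := by nlinarith
        gcongr
    _ = _ := by ring

theorem stmt3_general {d : ℕ} (K k₁ p : ℝ) (hK : 0 < K) (hk₁ : 0 < k₁)
    (hp : 2 ≤ p) (Cb Cσ : ℝ) :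
    ∃ αp βp : ℝ, 0 ≤ αp ∧ 0 ≤ βp ∧
      ∀ (b f : EuclideanSpace ℝ (Fin d) → EuclideanSpace ℝ (Fin d))
        (σ : EuclideanSpace ℝ (Fin d) → Matrix (Fin d) (Fin d) ℝ),
        ‖b 0‖ = Cb → frobNorm (σ 0) = Cσ →
        (∀ x y, ⟪b y - b x, y - x⟫ ≤ -K * ‖y - x‖ ^ 2) →
        (∀ x, ‖f x‖ ≤ k₁ * (1 + ‖x‖)) →
        (∀ x y, frobNorm (σ x - σ y) ≤ k₁ * ‖x - y‖) →
        ∀ x : EuclideanSpace ℝ (Fin d), x ≠ 0 →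
          p * ‖x‖ ^ (p - 2) * ⟪x, b x + f x⟫
            + (p / 2) * ‖x‖ ^ (p - 2) * frobNorm (σ x) ^ 2
            + (p * (p - 2) / 2) * ‖x‖ ^ (p - 4)
              * eucNorm ((σ x).transpose.mulVec (WithLp.equiv 2 (Fin d → ℝ) x)) ^ 2
          ≤ βp * ‖x‖ ^ p + αp * ‖x‖ ^ (p - 2) := by
  have hp₁ : 0 ≤ p - 1 := by linarith
  refine ⟨p * (|Cb| + k₁) + p * (p - 1) * Cσ ^ 2, p * (|Cb| + 2 * k₁) + p * (p - 1) * k₁ ^ 2,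
    by positivity, by positivity, ?_⟩
  intro b f σ hCb hCσ hb hf hσ x hx
  set r := ‖x‖
  have hr : 0 < r := norm_pos_iff.mpr hx
  have hdrift : ⟪x, b x + f x⟫ ≤ (|Cb| + k₁) * r + k₁ * r ^ 2 := by
    have hbx := inner_le_norm_map_zero_mul_norm_of_dissipative hK.le hb x
    have hfx : ⟪x, f x⟫ ≤ r * (k₁ * (1 + r)) :=
      (real_inner_le_norm x (f x)).trans (mul_le_mul_of_nonneg_left (hf x) hr.le)
    rw [hCb] at hbx
    rw [inner_add_right]
    nlinarith [mul_le_mul_of_nonneg_right (le_abs_self Cb) hr.le]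
  have hdiff : frobNorm (σ x) ≤ Cσ + k₁ * r := hCσ ▸ frobNorm_le_of_lipschitz hσ x
  set E := eucNorm ((σ x)ᵀ *ᵥ WithLp.equiv 2 (Fin d → ℝ) x)
  have hE : E / r ≤ frobNorm (σ x) :=
    div_le_of_le_mul₀ hr.le (frobNorm_nonneg _) (eucNorm_transpose_mulVec_le (σ x) x)
  have hE₀ : 0 ≤ E := Real.sqrt_nonneg _
  have hbracket := generator_bracket_le hp (abs_nonneg Cb) hk₁.le hdrift (frobNorm_nonneg _)
    hdiff (div_nonneg hE₀ hr.le) hE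
  have hrp : r ^ p = r ^ (p - 2) * r ^ 2 := by
    rw [← Real.rpow_add_natCast hr.ne']; norm_num
  have hrp4 : r ^ (p - 4) = r ^ (p - 2) / r ^ 2 := by
    rw [← Real.rpow_sub_natCast hr.ne']; ring_nf
  calc _ = r ^ (p - 2) * (p * ⟪x, b x + f x⟫ + p / 2 * frobNorm (σ x) ^ 2
        + p * (p - 2) / 2 * (E / r) ^ 2) := by
        rw [hrp4]; field_simp
    _ ≤ r ^ (p - 2) * ((p * (|Cb| + 2 * k₁) + p * (p - 1) * k₁ ^ 2) * r ^ 2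
        + (p * (|Cb| + k₁) + p * (p - 1) * Cσ ^ 2)) :=
        mul_le_mul_of_nonneg_left hbracket (by positivity)
    _ = _ := by rw [hrp]; ring

theorem stmt3 {d : ℕ} (hd : 1 ≤ d) (K k₁ p : ℝ) (hK : 0 < K) (hk₁ : 0 < k₁)
    (hp : 2 ≤ p) (Cb Cσ : ℝ) :
    ∃ αp βp : ℝ, 0 ≤ αp ∧ 0 ≤ βp ∧
      ∀ (b f : EuclideanSpace ℝ (Fin d) → EuclideanSpace ℝ (Fin d))
        (σ : EuclideanSpace ℝ (Fin d) → Matrix (Fin d) (Fin d) ℝ),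
        ‖b 0‖ = Cb → frobNorm (σ 0) = Cσ →
        (∀ x y, ⟪b y - b x, y - x⟫ ≤ -K * ‖y - x‖ ^ 2) →
        (∀ x, ‖f x‖ ≤ k₁ * (1 + ‖x‖)) →
        (∀ x y, frobNorm (σ x - σ y) ≤ k₁ * ‖x - y‖) →
        ∀ x : EuclideanSpace ℝ (Fin d), x ≠ 0 →
          p * ‖x‖ ^ (p - 2) * ⟪x, b x + f x⟫
            + (p / 2) * ‖x‖ ^ (p - 2) * frobNorm (σ x) ^ 2
            + (p * (p - 2) / 2) * ‖x‖ ^ (p - 4)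
              * eucNorm ((σ x).transpose.mulVec (WithLp.equiv 2 (Fin d → ℝ) x)) ^ 2
          ≤ βp * ‖x‖ ^ p + αp * ‖x‖ ^ (p - 2) :=
  stmt3_general K k₁ p hK hk₁ hp Cb Cσ
end

section
/- Let d ≥ 1, K > 0 and M₁ ≥ 0. Suppose b : ℝ^d → ℝ^d is differentiable and satisfies ⟨b(y) − b(x), y − x⟩ ≤ −K‖y − x‖² for all x, y ∈ ℝ^d, and suppose φ : ℝ^d → ℝ is differentiable with 0 ≤ φ(x) ≤ 1 for all x and sup_{x ∈ ℝ^d} ‖b(x)‖·‖∇φ(x)‖ ≤ M₁. Let g(x) = φ(x)b(x). Then for all x, y ∈ ℝ^d, ⟨(Dg(x))y, y⟩ ≤ (−Kφ(x) + M₁)‖y‖² ≤ M₁‖y‖², where Dg(x) is the Fréchet derivative of g at x. -/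
/-!
By the product rule, `D(φ • b)(x) y = φ x • Db(x) y + (Dφ(x) y) • b x`. Differentiating the
dissipativity condition along rays from `x` gives `⟪Db(x) y, y⟫ ≤ -K ‖y‖²`, which `φ x ≥ 0`
preserves, and Cauchy–Schwarz bounds the cutoff term by `‖b x‖ ‖Dφ(x)‖ ‖y‖² ≤ M₁ ‖y‖²`.
-/

open scoped RealInnerProductSpace
open Set

variable {E : Type*} [NormedAddCommGroup E] [InnerProductSpace ℝ E]

/-- Fermat's rule along the ray `x + t • v`, `t ≥ 0`, applied to `z ↦ ⟪v, f z⟫ - c ⟪v, z⟫`, which is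
maximal at `x` on that ray by the one-sided bound. -/
theorem real_inner_apply_self_le_of_inner_sub_le {f : E → E} {f' : E →L[ℝ] E} {x : E} {c : ℝ}
    (hf : HasFDerivAt f f' x) (h : ∀ y, ⟪f y - f x, y - x⟫ ≤ c * ‖y - x‖ ^ 2) (v : E) :
    ⟪f' v, v⟫ ≤ c * ‖v‖ ^ 2 := by
  set L : E →L[ℝ] ℝ := innerSL ℝ v
  set ray : Set E := (fun t : ℝ => x + t • v) '' Ici 0
  have hderiv : HasFDerivAt (fun z => L (f z) - c * L z) (L.comp f' - c • L) x :=
    (L.hasFDerivAt.comp x hf).sub (L.hasFDerivAt.const_smul c)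
  have hmax : IsMaxOn (fun z => L (f z) - c * L z) ray x := by
    rintro _ ⟨t, ht, rfl⟩
    have hray : t * ⟪f (x + t • v) - f x, v⟫ ≤ c * (t ^ 2 * ‖v‖ ^ 2) := by
      simpa only [add_sub_cancel_left, norm_smul, Real.norm_eq_abs, mul_pow, sq_abs,
        real_inner_smul_right] using h (x + t • v)
    show L (f (x + t • v)) - c * L (x + t • v) ≤ L (f x) - c * L x
    simp only [L, innerSL_apply_apply, inner_add_right, real_inner_smul_right,
      real_inner_self_eq_norm_sq]
    rw [inner_sub_left, real_inner_comm v, real_inner_comm v (f x)] at hray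
    rcases (mem_Ici.mp ht).eq_or_lt with rfl | htpos
    · simp
    · nlinarith
  have hv : v ∈ posTangentConeAt ray x :=
    mem_posTangentConeAt_of_frequently_mem <| Filter.Eventually.frequently <|
      eventually_mem_nhdsWithin.mono fun t ht => ⟨t, mem_Ici.mpr (le_of_lt ht), rfl⟩
  have hfermat := hmax.localize.hasFDerivWithinAt_nonpos hderiv.hasFDerivWithinAt hv
  simp only [sub_apply, ContinuousLinearMap.comp_apply, smul_apply, smul_eq_mul, L,
    innerSL_apply_apply, real_inner_self_eq_norm_sq] at hfermat
  rw [real_inner_comm]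
  linarith

theorem real_inner_apply_smul_le (ℓ : E →L[ℝ] ℝ) (u y : E) :
    ⟪ℓ y • u, y⟫ ≤ ‖u‖ * ‖ℓ‖ * ‖y‖ ^ 2 :=
  calc ⟪ℓ y • u, y⟫ ≤ ‖ℓ y‖ * ‖u‖ * ‖y‖ := by
        simpa only [norm_smul] using real_inner_le_norm (ℓ y • u) y
    _ ≤ ‖ℓ‖ * ‖y‖ * ‖u‖ * ‖y‖ := by gcongr; exact ℓ.le_opNorm y
    _ = ‖u‖ * ‖ℓ‖ * ‖y‖ ^ 2 := by ring

theorem stmt11_general {d : ℕ} (K M₁ : ℝ) (hK : 0 < K)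
    (b : EuclideanSpace ℝ (Fin d) → EuclideanSpace ℝ (Fin d))
    (φ : EuclideanSpace ℝ (Fin d) → ℝ)
    (hbdiff : Differentiable ℝ b) (hφdiff : Differentiable ℝ φ)
    (hb : ∀ x y, ⟪b y - b x, y - x⟫ ≤ -K * ‖y - x‖ ^ 2)
    (hφ : ∀ x, 0 ≤ φ x ∧ φ x ≤ 1)
    (hbφ : ∀ x, ‖b x‖ * ‖fderiv ℝ φ x‖ ≤ M₁) :
    ∀ x y : EuclideanSpace ℝ (Fin d),
      ⟪fderiv ℝ (fun z => φ z • b z) x y, y⟫ ≤ (-K * φ x + M₁) * ‖y‖ ^ 2 ∧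
      (-K * φ x + M₁) * ‖y‖ ^ 2 ≤ M₁ * ‖y‖ ^ 2 := by
  intro x y
  have hφx := (hφ x).1
  have hproduct : ⟪fderiv ℝ (fun z => φ z • b z) x y, y⟫ =
      φ x * ⟪fderiv ℝ b x y, y⟫ + ⟪fderiv ℝ φ x y • b x, y⟫ := by
    rw [fderiv_fun_smul (hφdiff x) (hbdiff x)]
    simp [inner_add_left, real_inner_smul_left]
  have hdrift := real_inner_apply_self_le_of_inner_sub_le (hbdiff x).hasFDerivAt (hb x) y
  have hcutoff := real_inner_apply_smul_le (fderiv ℝ φ x) (b x) y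
  constructor
  · rw [hproduct]
    nlinarith [mul_le_mul_of_nonneg_left hdrift hφx,
      mul_le_mul_of_nonneg_right (hbφ x) (sq_nonneg ‖y‖)]
  · nlinarith [mul_nonneg (mul_nonneg hK.le hφx) (sq_nonneg ‖y‖)]

theorem stmt11 {d : ℕ} (hd : 1 ≤ d) (K M₁ : ℝ) (hK : 0 < K) (hM₁ : 0 ≤ M₁)
    (b : EuclideanSpace ℝ (Fin d) → EuclideanSpace ℝ (Fin d))
    (φ : EuclideanSpace ℝ (Fin d) → ℝ)
    (hbdiff : Differentiable ℝ b) (hφdiff : Differentiable ℝ φ)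
    (hb : ∀ x y, ⟪b y - b x, y - x⟫ ≤ -K * ‖y - x‖ ^ 2)
    (hφ : ∀ x, 0 ≤ φ x ∧ φ x ≤ 1)
    (hbφ : ∀ x, ‖b x‖ * ‖fderiv ℝ φ x‖ ≤ M₁) :
    ∀ x y : EuclideanSpace ℝ (Fin d),
      ⟪fderiv ℝ (fun z => φ z • b z) x y, y⟫ ≤ (-K * φ x + M₁) * ‖y‖ ^ 2 ∧
      (-K * φ x + M₁) * ‖y‖ ^ 2 ≤ M₁ * ‖y‖ ^ 2 :=
  stmt11_general K M₁ hK b φ hbdiff hφdiff hb hφ hbφ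
end
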